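/- In the Gaussian location model, any estimator θ̂_n with P_{n,0}(θ̂_n = 0) → 1 has maximal scaled absolute bias diverging to infinity: sup_{θ∈ℝ} E_{n,θ}[√n|θ̂_n − θ|] → ∞ as n → ∞. -/

import Mathlib

/-!
Under the local alternative `θ = c / √n`, the likelihood ratio
`dP_{n,θ} / dP_{n,0} = ∏ᵢ exp (θ yᵢ - θ² / 2)` has second moment `exp (n θ²) = exp c²`
under `P_{n,0}`, so by Cauchy–Schwarz `P_{n,θ}(B) ≤ P_{n,0}(B)^{1/2} · exp (c² / 2)`: events that
are negligible under `P_{n,0}` remain negligible under `P_{n,c/√n}` (contiguity). Hence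
`θ̂_n = 0` with probability tending to one also under `θ = c / √n`, where the scaled loss
`√n |0 - θ|` equals `c`; the risk at that parameter is therefore asymptotically at least `c`,
and `c` is arbitrary.
-/

open MeasureTheory ProbabilityTheory Filter Topology

/-- Joint law of a sample of size `n` of i.i.d. `N(θ,1)` observations. -/
noncomputable def gaussP (n : ℕ) (θ : ℝ) : Measure (Fin n → ℝ) :=
  Measure.pi fun _ => gaussianReal θ 1

open Real
open scoped ENNReal

noncomputable def gaussianLikelihoodRatio (θ x : ℝ) : ℝ≥0∞ :=
  ENNReal.ofReal (exp (θ * x - θ ^ 2 / 2))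

lemma measurable_gaussianLikelihoodRatio (θ : ℝ) : Measurable (gaussianLikelihoodRatio θ) := by
  unfold gaussianLikelihoodRatio
  fun_prop

lemma gaussianPDF_eq_mul_gaussianLikelihoodRatio (θ x : ℝ) :
    gaussianPDF θ 1 x = gaussianPDF 0 1 x * gaussianLikelihoodRatio θ x := by
  unfold gaussianPDF gaussianPDFReal gaussianLikelihoodRatio
  rw [← ENNReal.ofReal_mul (by positivity)]
  congr 1
  rw [mul_assoc _ (rexp _), ← exp_add]
  congr 2
  push_cast
  ring

lemma gaussianReal_eq_withDensity (θ : ℝ) :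
    gaussianReal θ 1 = (gaussianReal 0 1).withDensity (gaussianLikelihoodRatio θ) := by
  rw [gaussianReal_of_var_ne_zero θ one_ne_zero, gaussianReal_of_var_ne_zero 0 one_ne_zero,
    ← withDensity_mul _ (measurable_gaussianPDF 0 1) (measurable_gaussianLikelihoodRatio θ)]
  congr 1
  ext x
  exact gaussianPDF_eq_mul_gaussianLikelihoodRatio θ x

lemma lintegral_gaussianLikelihoodRatio (θ : ℝ) :
    ∫⁻ x, gaussianLikelihoodRatio θ x ∂gaussianReal 0 1 = 1 := by
  rw [← setLIntegral_univ, ← withDensity_apply _ MeasurableSet.univ,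
    ← gaussianReal_eq_withDensity, measure_univ]

lemma gaussianLikelihoodRatio_mul_self (θ x : ℝ) :
    gaussianLikelihoodRatio θ x * gaussianLikelihoodRatio θ x =
      ENNReal.ofReal (exp (θ ^ 2)) * gaussianLikelihoodRatio (2 * θ) x := by
  unfold gaussianLikelihoodRatio
  rw [← ENNReal.ofReal_mul (exp_nonneg _), ← ENNReal.ofReal_mul (exp_nonneg _),
    ← exp_add, ← exp_add]
  ring_nf

section Pi

variable {ι : Type*} [Fintype ι] {Ω : ι → Type*} [∀ i, MeasurableSpace (Ω i)]
  (μ : ∀ i, Measure (Ω i)) [∀ i, IsProbabilityMeasure (μ i)]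
  {g : ∀ i, Ω i → ℝ≥0∞}

lemma lintegral_pi_prod_eq_prod (hg : ∀ i, Measurable (g i)) :
    ∫⁻ y, ∏ i, g i (y i) ∂Measure.pi μ = ∏ i, ∫⁻ x, g i x ∂μ i := by
  rw [lintegral_prod_eq_prod_lintegral_of_indepFun _ _
    (iIndepFun_pi fun i => (hg i).aemeasurable) fun i => (hg i).comp (measurable_pi_apply i)]
  exact Finset.prod_congr rfl fun i _ => (measurePreserving_eval μ i).lintegral_comp (hg i)

lemma MeasureTheory.Measure.pi_withDensity (hg : ∀ i, Measurable (g i))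
    [∀ i, SigmaFinite ((μ i).withDensity (g i))] :
    Measure.pi (fun i => (μ i).withDensity (g i)) =
      (Measure.pi μ).withDensity (fun y => ∏ i, g i (y i)) := by
  refine Measure.pi_eq fun s hs => ?_
  have hbox : (Set.univ.pi s).indicator (fun y => ∏ i, g i (y i)) =
      fun y => ∏ i, (s i).indicator (g i) (y i) := by
    ext y
    by_cases hy : y ∈ Set.univ.pi s
    · rw [Set.indicator_of_mem hy]
      exact Finset.prod_congr rfl fun i _ => (Set.indicator_of_mem (hy i trivial) _).symm
    · obtain ⟨i, hi⟩ : ∃ i, y i ∉ s i := by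
        simpa only [Set.mem_univ_pi, not_forall] using hy
      rw [Set.indicator_of_notMem hy]
      exact (Finset.prod_eq_zero (Finset.mem_univ i) (Set.indicator_of_notMem hi _)).symm
  rw [withDensity_apply _ (MeasurableSet.univ_pi hs),
    ← lintegral_indicator (MeasurableSet.univ_pi hs),
    hbox, lintegral_pi_prod_eq_prod μ fun i => (hg i).indicator (hs i)]
  exact Finset.prod_congr rfl fun i _ => by
    rw [withDensity_apply _ (hs i), lintegral_indicator (hs i)]

end Pi

instance (n : ℕ) (θ : ℝ) : IsProbabilityMeasure (gaussP n θ) := by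
  unfold gaussP
  infer_instance

lemma gaussP_eq_withDensity (n : ℕ) (θ : ℝ) :
    gaussP n θ = (gaussP n 0).withDensity fun y => ∏ i, gaussianLikelihoodRatio θ (y i) := by
  have : SigmaFinite ((gaussianReal 0 1).withDensity (gaussianLikelihoodRatio θ)) := by
    rw [← gaussianReal_eq_withDensity]
    infer_instance
  simp only [gaussP, gaussianReal_eq_withDensity θ]
  exact Measure.pi_withDensity _ fun _ => measurable_gaussianLikelihoodRatio θ

lemma lintegral_prod_gaussianLikelihoodRatio_sq (n : ℕ) (θ : ℝ) :
    ∫⁻ y, (∏ i, gaussianLikelihoodRatio θ (y i)) ^ 2 ∂gaussP n 0 =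
      ENNReal.ofReal (exp (n * θ ^ 2)) := by
  have hsq : ∀ y : Fin n → ℝ, (∏ i, gaussianLikelihoodRatio θ (y i)) ^ 2 =
      ∏ i, ENNReal.ofReal (exp (θ ^ 2)) * gaussianLikelihoodRatio (2 * θ) (y i) := fun y => by
    simp only [sq, ← Finset.prod_mul_distrib, gaussianLikelihoodRatio_mul_self]
  simp_rw [hsq]
  rw [gaussP, lintegral_pi_prod_eq_prod (g := fun _ x =>
      ENNReal.ofReal (exp (θ ^ 2)) * gaussianLikelihoodRatio (2 * θ) x) _ fun _ =>
      measurable_const.mul (measurable_gaussianLikelihoodRatio _),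
    Finset.prod_const, lintegral_const_mul _ (measurable_gaussianLikelihoodRatio _),
    lintegral_gaussianLikelihoodRatio, mul_one, ← ENNReal.ofReal_pow (exp_nonneg _),
    ← exp_nat_mul, Finset.card_univ, Fintype.card_fin]

lemma withDensity_apply_le_rpow_mul_rpow {α : Type*} [MeasurableSpace α] (μ : Measure α)
    {f : α → ℝ≥0∞} (hf : AEMeasurable f μ) {s : Set α} (hs : MeasurableSet s) :
    μ.withDensity f s ≤ μ s ^ (1 / 2 : ℝ) * (∫⁻ x, f x ^ 2 ∂μ) ^ (1 / 2 : ℝ) := by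
  have hind : ∀ x, s.indicator (1 : α → ℝ≥0∞) x ^ (2 : ℝ) = s.indicator 1 x := by
    intro x
    by_cases hx : x ∈ s <;> simp [hx]
  have hmul : s.indicator f = s.indicator 1 * f := by
    ext x
    by_cases hx : x ∈ s <;> simp [hx]
  rw [withDensity_apply _ hs, ← lintegral_indicator hs, hmul]
  simpa only [hind, lintegral_indicator_one hs, ENNReal.rpow_two] using
    ENNReal.lintegral_mul_le_Lp_mul_Lq (f := s.indicator 1) μ Real.HolderConjugate.two_two
      ((aemeasurable_one).indicator hs) hf

lemma gaussP_apply_le (n : ℕ) (θ : ℝ) {B : Set (Fin n → ℝ)} (hB : MeasurableSet B) :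
    gaussP n θ B ≤ gaussP n 0 B ^ (1 / 2 : ℝ) * ENNReal.ofReal (exp (n * θ ^ 2 / 2)) := by
  have hLR : Measurable fun y : Fin n → ℝ => ∏ i, gaussianLikelihoodRatio θ (y i) :=
    Finset.measurable_prod _ fun i _ =>
      (measurable_gaussianLikelihoodRatio θ).comp (measurable_pi_apply i)
  rw [gaussP_eq_withDensity n θ]
  refine (withDensity_apply_le_rpow_mul_rpow _ hLR.aemeasurable hB).trans_eq ?_
  rw [lintegral_prod_gaussianLikelihoodRatio_sq, ENNReal.ofReal_rpow_of_pos (exp_pos _),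
    ← exp_mul]
  ring_nf

lemma tendsto_gaussP_div_sqrt_of_tendsto_zero (c : ℝ) {B : ∀ n, Set (Fin n → ℝ)}
    (hB : ∀ n, MeasurableSet (B n)) (h0 : Tendsto (fun n => gaussP n 0 (B n)) atTop (𝓝 0)) :
    Tendsto (fun n : ℕ => gaussP n (c / √n) (B n)) atTop (𝓝 0) := by
  have hbound : ∀ n : ℕ, gaussP n (c / √n) (B n) ≤
      gaussP n 0 (B n) ^ (1 / 2 : ℝ) * ENNReal.ofReal (exp (c ^ 2 / 2)) := by
    intro n
    have hnc : (n : ℝ) * (c / √n) ^ 2 ≤ c ^ 2 := by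
      rw [div_pow, sq_sqrt n.cast_nonneg, mul_div_assoc']
      rcases n.eq_zero_or_pos with rfl | hn
      · simp only [Nat.cast_zero, zero_mul, zero_div]
        positivity
      · rw [mul_div_cancel_left₀ _ (by positivity)]
    refine (gaussP_apply_le n _ (hB n)).trans ?_
    gcongr
  have hlim : Tendsto (fun n => gaussP n 0 (B n) ^ (1 / 2 : ℝ) * ENNReal.ofReal (exp (c ^ 2 / 2)))
      atTop (𝓝 0) := by
    have := ((ENNReal.continuous_rpow_const (y := 1 / 2)).tendsto 0).comp h0
    simpa [ENNReal.zero_rpow_of_pos] using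
      ENNReal.Tendsto.mul_const this (Or.inr ENNReal.ofReal_ne_top)
  exact tendsto_of_tendsto_of_tendsto_of_le_of_le tendsto_const_nhds hlim (fun _ => zero_le) hbound

lemma tendsto_measure_compl_nhds_zero_iff {ι : Type*} {l : Filter ι} {Ω : ι → Type*}
    [∀ i, MeasurableSpace (Ω i)] (μ : ∀ i, Measure (Ω i))
    [∀ i, IsProbabilityMeasure (μ i)]
    {s : ∀ i, Set (Ω i)} (hs : ∀ i, MeasurableSet (s i)) :
    Tendsto (fun i => μ i (s i)ᶜ) l (𝓝 0) ↔ Tendsto (fun i => μ i (s i)) l (𝓝 1) := by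
  have hsub : ∀ {a : ι → ℝ≥0∞} {x : ℝ≥0∞}, Tendsto a l (𝓝 x) → x ≤ 1 →
      Tendsto (fun i => 1 - a i) l (𝓝 (1 - x)) := fun h _ =>
    ENNReal.Tendsto.sub tendsto_const_nhds h (Or.inl ENNReal.one_ne_top)
  simp_rw [prob_compl_eq_one_sub (hs _)]
  constructor
  · intro h
    simpa [ENNReal.sub_sub_cancel ENNReal.one_ne_top prob_le_one] using hsub h zero_le_one
  · intro h
    simpa using hsub h le_rfl

lemma ofReal_mul_measure_le_lintegral {α : Type*} [MeasurableSpace α] (μ : Measure α)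
    {f : α → ℝ} (hf : Measurable f) (k θ : ℝ) :
    ENNReal.ofReal (k * |θ|) * μ {y | f y = 0} ≤
      ∫⁻ y, ENNReal.ofReal (k * |f y - θ|) ∂μ := by
  have hs : MeasurableSet {y | f y = 0} := hf (measurableSet_singleton 0)
  calc ENNReal.ofReal (k * |θ|) * μ {y | f y = 0}
      = ∫⁻ y in {y | f y = 0}, ENNReal.ofReal (k * |f y - θ|) ∂μ := by
        rw [← setLIntegral_const]
        refine setLIntegral_congr_fun hs fun y (hy : f y = 0) => ?_
        rw [hy, zero_sub, abs_neg]
    _ ≤ ∫⁻ y, ENNReal.ofReal (k * |f y - θ|) ∂μ := setLIntegral_le_lintegral _ _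

theorem stmt_12
    (est : (n : ℕ) → (Fin n → ℝ) → ℝ)
    (hmeas : ∀ n, Measurable (est n))
    (hsparse : Tendsto (fun n => gaussP n 0 {y | est n y = 0}) atTop (𝓝 1)) :
    Tendsto (fun n : ℕ => ⨆ θ : ℝ,
        ∫⁻ y, ENNReal.ofReal (Real.sqrt n * |est n y - θ|) ∂(gaussP n θ))
      atTop (𝓝 ⊤) := by
  have hB : ∀ n, MeasurableSet {y | est n y = 0} := fun n => hmeas n (measurableSet_singleton 0)
  rw [ENNReal.tendsto_nhds_top_iff_nnreal]
  intro x
  set c : ℝ := x + 1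
  have hlocal : Tendsto (fun n : ℕ => gaussP n (c / √n) {y | est n y = 0}) atTop (𝓝 1) :=
    (tendsto_measure_compl_nhds_zero_iff _ hB).1 <| tendsto_gaussP_div_sqrt_of_tendsto_zero c
      (fun n => (hB n).compl) ((tendsto_measure_compl_nhds_zero_iff _ hB).2 hsparse)
  have hrisk : Tendsto (fun n : ℕ => ENNReal.ofReal c * gaussP n (c / √n) {y | est n y = 0})
      atTop (𝓝 (ENNReal.ofReal c)) := by
    simpa using ENNReal.Tendsto.const_mul hlocal (Or.inr ENNReal.ofReal_ne_top)
  have hxc : (x : ℝ≥0∞) < ENNReal.ofReal c := by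
    rw [← ENNReal.ofReal_coe_nnreal]
    exact (ENNReal.ofReal_lt_ofReal_iff (by positivity)).2 (lt_add_one _)
  filter_upwards [hrisk.eventually_const_lt hxc, eventually_ge_atTop 1] with n hn hn1
  have hscale : √n * |c / √n| = c := by
    rw [abs_of_pos (by positivity), mul_div_cancel₀ _ (by positivity)]
  calc (x : ℝ≥0∞) < ENNReal.ofReal c * gaussP n (c / √n) {y | est n y = 0} := hn
    _ ≤ ∫⁻ y, ENNReal.ofReal (√n * |est n y - c / √n|) ∂gaussP n (c / √n) := by
        simpa only [hscale] using ofReal_mul_measure_le_lintegral _ (hmeas n) (√n) (c / √n)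
    _ ≤ _ := le_iSup (fun θ : ℝ => ∫⁻ y, ENNReal.ofReal (√n * |est n y - θ|) ∂gaussP n θ)
        (c / √n)
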